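/- Let n ≥ 3 be an integer. Define X_i = 4(i − 1/2)/(i + 1) = C_i/C_{i−1} for i ≥ 1 (C_i the i-th Catalan number) and p_i = i(i+1)(3n − 2i − 1)/(n(n+1)(n−1)) for 1 ≤ i ≤ n − 2. Then: (a) 0 ≤ p_i ≤ 1 for all 1 ≤ i ≤ n − 2; (b) p_1 = X_n − X_{n−1}; (c) p_{n−2} = 1 − (X_n − X_{n−1}); (d) p_i + p_{n−i−1} = 1 for all 1 ≤ i ≤ n − 2; (e) p_{i+1} · X_{i+1} + (1 − p_i) · X_{n−i−1} = X_n for all 1 ≤ i ≤ n − 3. -/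

import Mathlib

set_option maxHeartbeats 1000000


/-- `X_i = 4(i - 1/2)/(i + 1)`, which equals the Catalan ratio `C_i/C_{i-1}`. -/
def Xr (i : ℕ) : ℚ := 4 * ((i : ℚ) - 1 / 2) / ((i : ℚ) + 1)

/-- `p_i = i(i+1)(3n - 2i - 1)/(n(n+1)(n-1))`. -/
def pr (n i : ℕ) : ℚ :=
  (i : ℚ) * ((i : ℚ) + 1) * (3 * (n : ℚ) - 2 * (i : ℚ) - 1) /
    ((n : ℚ) * ((n : ℚ) + 1) * ((n : ℚ) - 1))

/-- Properties of the probabilities `p_i` and ratios `X_i` used to build the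
stochastic map on Dyck paths: `X_i = C_i/C_{i-1}`; (a) `0 ≤ p_i ≤ 1`;
(b) `p_1 = X_n - X_{n-1}`; (c) `p_{n-2} = 1 - (X_n - X_{n-1})`;
(d) `p_i + p_{n-i-1} = 1`; (e) `p_{i+1}·X_{i+1} + (1 - p_i)·X_{n-i-1} = X_n`. -/
theorem stmt14 (n : ℕ) (hn : 3 ≤ n) :
    (∀ i : ℕ, 1 ≤ i → Xr i = (catalan i : ℚ) / (catalan (i - 1) : ℚ)) ∧
    (∀ i : ℕ, 1 ≤ i → i ≤ n - 2 → 0 ≤ pr n i ∧ pr n i ≤ 1) ∧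
    pr n 1 = Xr n - Xr (n - 1) ∧
    pr n (n - 2) = 1 - (Xr n - Xr (n - 1)) ∧
    (∀ i : ℕ, 1 ≤ i → i ≤ n - 2 → pr n i + pr n (n - i - 1) = 1) ∧
    (∀ i : ℕ, 1 ≤ i → i ≤ n - 3 →
      pr n (i + 1) * Xr (i + 1) + (1 - pr n i) * Xr (n - i - 1) = Xr n) := by
  have hnQ : (3 : ℚ) ≤ (n : ℚ) := by exact_mod_cast hn
  have hn0 : (n : ℚ) ≠ 0 := by positivity
  have hn1 : (n : ℚ) + 1 ≠ 0 := by positivity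
  have hnm1 : (n : ℚ) - 1 ≠ 0 := by intro h; nlinarith
  have hc1 : ((n - 1 : ℕ) : ℚ) = (n : ℚ) - 1 := by
    have : 1 ≤ n := by omega
    push_cast [this]; ring
  have hc2 : ((n - 2 : ℕ) : ℚ) = (n : ℚ) - 2 := by
    have : 2 ≤ n := by omega
    push_cast [this]; ring
  refine ⟨?_, ?_, ?_, ?_, ?_, ?_⟩
  · rintro i hi
    obtain ⟨j, rfl⟩ := Nat.exists_eq_add_of_le hi
    simp only [Nat.add_sub_cancel_left] at *
    have hcatn : 0 < catalan j := by
      have h := succ_mul_catalan_eq_centralBinom j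
      have hb := j.centralBinom_pos
      rcases Nat.eq_zero_or_pos (catalan j) with h0 | h0
      · rw [h0, mul_zero] at h; omega
      · exact h0
    have hcat : (0 : ℚ) < catalan j := by exact_mod_cast hcatn
    have h1 : ((j : ℚ) + 1 + 1) * catalan (j + 1) = Nat.centralBinom (j + 1) := by
      exact_mod_cast succ_mul_catalan_eq_centralBinom (j + 1)
    have h2 : ((j : ℚ) + 1) * catalan j = Nat.centralBinom j := by
      exact_mod_cast succ_mul_catalan_eq_centralBinom j
    have h3 : ((j : ℚ) + 1) * Nat.centralBinom (j + 1)
        = 2 * (2 * j + 1) * Nat.centralBinom j := by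
      exact_mod_cast Nat.succ_mul_centralBinom_succ j
    have hj1 : ((j : ℚ) + 1) ≠ 0 := by positivity
    have hj2 : ((j : ℚ) + 2) ≠ 0 := by positivity
    have key : (catalan (j + 1) : ℚ) = 2 * (2 * j + 1) * catalan j / (((j:ℚ)+2)) := by
      field_simp
      nlinarith [h1, h2, h3]
    rw [show (1 + j) = (j + 1) by ring] at *
    rw [Xr, key]
    push_cast
    field_simp
    ring
  · rintro i hi1 hi2
    have hi2' : (i : ℚ) ≤ (n : ℚ) - 2 := by
      have : i ≤ n - 2 := hi2
      have h := (Nat.le_sub_iff_add_le (by omega)).mp this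
      have : (i : ℚ) + 2 ≤ n := by exact_mod_cast h
      linarith
    have hi1' : (1 : ℚ) ≤ (i : ℚ) := by exact_mod_cast hi1
    have hden : (0:ℚ) < (n : ℚ) * ((n : ℚ) + 1) * ((n : ℚ) - 1) := by
      apply mul_pos (mul_pos (by linarith) (by linarith)) (by linarith)
    constructor
    · rw [pr]
      apply div_nonneg _ hden.le
      have : (0:ℚ) ≤ 3 * (n:ℚ) - 2 * i - 1 := by linarith
      exact mul_nonneg (mul_nonneg (by linarith) (by linarith)) this
    · rw [pr, div_le_one hden]
      have key : (n:ℚ) * ((n:ℚ) + 1) * ((n:ℚ) - 1) - (i:ℚ) * ((i:ℚ) + 1) * (3 * (n:ℚ) - 2 * (i:ℚ) - 1)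
          = ((n:ℚ) - 1 - i) * ((n:ℚ) - i) * ((n:ℚ) + 2 * i + 1) := by ring
      have h1 : (0:ℚ) ≤ ((n:ℚ) - 1 - i) := by linarith
      have h2 : (0:ℚ) ≤ ((n:ℚ) - i) := by linarith
      have h3 : (0:ℚ) ≤ ((n:ℚ) + 2 * i + 1) := by linarith
      nlinarith [mul_nonneg (mul_nonneg h1 h2) h3]
  · simp only [pr, Xr, hc1, sub_add_cancel]
    push_cast
    field_simp
    ring
  · simp only [pr, Xr, hc1, hc2, sub_add_cancel]
    push_cast
    field_simp
    ring
  · rintro i hi1 hi2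
    have hc3 : ((n - i - 1 : ℕ) : ℚ) = (n : ℚ) - i - 1 := by
      have h : i + 1 ≤ n := by omega
      have : n - i - 1 = n - (i + 1) := by omega
      rw [this]
      push_cast [h]; ring
    simp only [pr, hc3]
    field_simp
    ring
  · rintro i hi1 hi2
    have hn3 : 3 ≤ n := hn
    have hile : i ≤ n - 3 := hi2
    have hi' : (i : ℚ) ≤ (n : ℚ) - 3 := by
      have h := (Nat.le_sub_iff_add_le (by omega)).mp hile
      have : (i : ℚ) + 3 ≤ n := by exact_mod_cast h
      linarith
    have hc3 : ((n - i - 1 : ℕ) : ℚ) = (n : ℚ) - i - 1 := by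
      have h : i + 1 ≤ n := by omega
      have : n - i - 1 = n - (i + 1) := by omega
      rw [this]
      push_cast [h]; ring
    have hni : (n : ℚ) - i ≠ 0 := by
      intro h; nlinarith
    have hip : ((i : ℚ) + 1) + 1 ≠ 0 := by positivity
    simp only [pr, Xr, hc3, sub_add_cancel]
    push_cast
    field_simp
    ring
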